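/- For the vector field F₉(x,y,z) = (−yz, 0, xz) on ℝ³ (the λ=0 case), the function I(x,y,z) = x²/2 + yz is a first integral, and any solution starting on the zero level set {I = 0} with x(0) ≠ 0 satisfies x'(t) = x(t)²/2 along its domain, hence is incomplete (its maximal interval of existence is a proper subinterval of ℝ). -/

import Mathlib

/-- The geodesic field `F₉` of `Q₉` on `aff(ℝ) ⊕ ℝ` (`λ = 0`): `(−yz, 0, xz)`. -/
def F9aff (v : Fin 3 → ℝ) : Fin 3 → ℝ := ![-(v 1 * v 2), 0, v 0 * v 2]

/-!
Along a solution, `x' = -yz`, `y' = 0`, `z' = xz`, so `(x²/2 + yz)' = -xyz + xyz = 0`. On the level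
set `x²/2 + yz = 0` this turns into `x' = -yz = x²/2`, whose solutions `x(t) = 2 / (2 / x(0) - t)`
blow up at `t = 2 / x(0)`: concretely `1 / x + t / 2` is constant as long as `x ≠ 0`.
-/

section RiccatiBlowup

variable {f : ℝ → ℝ} {a : ℝ}

theorem false_of_forall_hasDerivAt_mul_sq_of_pos (ha : 0 < a)
    (hf : ∀ t, HasDerivAt f (a * f t ^ 2) t) (h0 : 0 < f 0) : False := by
  have hmono : Monotone f :=
    monotone_of_deriv_nonneg (fun t => (hf t).differentiableAt)
      (fun t => by rw [(hf t).deriv]; positivity)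
  have hpos : ∀ t, 0 ≤ t → 0 < f t := fun t ht => h0.trans_le (hmono ht)
  set T := (a * f 0)⁻¹ with hT_def
  have hT : 0 < T := by positivity
  have hconst : ∀ t ∈ Set.Ici (0 : ℝ), HasDerivAt (fun s => (f s)⁻¹ + a * s) 0 t := by
    intro t ht
    refine (((hf t).inv (hpos t ht).ne').add ((hasDerivAt_id t).const_mul a)).congr_deriv ?_
    field_simp [(hpos t ht).ne']
    ring
  have hT_eq : (f T)⁻¹ + a * T = (f 0)⁻¹ + a * 0 :=
    constant_of_has_deriv_right_zero
      (fun t ht => (hconst t ht.1).continuousAt.continuousWithinAt)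
      (fun t ht => (hconst t ht.1).hasDerivWithinAt) T ⟨hT.le, le_rfl⟩
  have haT : a * T = (f 0)⁻¹ := by
    rw [hT_def, mul_inv, ← mul_assoc, mul_inv_cancel₀ ha.ne', one_mul]
  have hinv : (f T)⁻¹ = 0 := by linarith
  exact (inv_pos.2 (hpos T hT.le)).ne' hinv

/-- The reflection `t ↦ -f (-t)` reduces a negative initial value to a positive one. -/
theorem false_of_forall_hasDerivAt_mul_sq (ha : 0 < a)
    (hf : ∀ t, HasDerivAt f (a * f t ^ 2) t) (h0 : f 0 ≠ 0) : False := by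
  rcases h0.lt_or_gt with hneg | hpos
  · refine false_of_forall_hasDerivAt_mul_sq_of_pos (f := fun t => -f (-t)) ha (fun t => ?_)
      (by simpa using hneg)
    exact (((hf (-t)).comp t (hasDerivAt_neg t)).neg).congr_deriv (by ring)
  · exact false_of_forall_hasDerivAt_mul_sq_of_pos ha hf hpos

end RiccatiBlowup

section FirstIntegral

noncomputable def firstIntegralF9 (v : Fin 3 → ℝ) : ℝ := v 0 ^ 2 / 2 + v 1 * v 2

variable {γ : ℝ → Fin 3 → ℝ}

theorem hasDerivAt_firstIntegralF9 {t : ℝ} (hγ : HasDerivAt γ (F9aff (γ t)) t) :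
    HasDerivAt (fun u => firstIntegralF9 (γ u)) 0 t := by
  have hx : HasDerivAt (fun u => γ u 0) (-(γ t 1 * γ t 2)) t := hasDerivAt_pi.1 hγ 0
  have hy : HasDerivAt (fun u => γ u 1) 0 t := hasDerivAt_pi.1 hγ 1
  have hz : HasDerivAt (fun u => γ u 2) (γ t 0 * γ t 2) t := hasDerivAt_pi.1 hγ 2
  exact (((hx.pow 2).div_const 2).add (hy.mul hz)).congr_deriv (by ring)

theorem firstIntegralF9_eq_of_forall_hasDerivAt (hγ : ∀ t, HasDerivAt γ (F9aff (γ t)) t)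
    (t s : ℝ) : firstIntegralF9 (γ t) = firstIntegralF9 (γ s) :=
  is_const_of_deriv_eq_zero (fun u => (hasDerivAt_firstIntegralF9 (hγ u)).differentiableAt)
    (fun u => (hasDerivAt_firstIntegralF9 (hγ u)).deriv) t s

theorem hasDerivAt_fst_of_firstIntegralF9_eq_zero {t : ℝ}
    (hγ : HasDerivAt γ (F9aff (γ t)) t) (hI : firstIntegralF9 (γ t) = 0) :
    HasDerivAt (fun u => γ u 0) (γ t 0 ^ 2 / 2) t := by
  refine (hasDerivAt_pi.1 hγ 0).congr_deriv ?_
  simp only [F9aff, Matrix.cons_val_zero]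
  unfold firstIntegralF9 at hI
  linarith

end FirstIntegral

/-- `I = x²/2 + yz` is a first integral of `F₉`, and any solution starting on
`{I = 0}` with `x 0 ≠ 0` satisfies `x' = x²/2`, hence cannot be defined on all of `ℝ`. -/
theorem stmt_5 :
    (∀ (γ : ℝ → Fin 3 → ℝ) (t : ℝ), HasDerivAt γ (F9aff (γ t)) t →
        HasDerivAt (fun u => (γ u 0) ^ 2 / 2 + γ u 1 * γ u 2) 0 t) ∧
    (∀ γ : ℝ → Fin 3 → ℝ, (∀ t, HasDerivAt γ (F9aff (γ t)) t) →
        (γ 0 0) ^ 2 / 2 + γ 0 1 * γ 0 2 = 0 → γ 0 0 ≠ 0 →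
        (∀ t, HasDerivAt (fun u => γ u 0) ((γ t 0) ^ 2 / 2) t) ∧ False) := by
  refine ⟨fun γ t hγ => hasDerivAt_firstIntegralF9 hγ, fun γ hγ hI0 hx0 => ?_⟩
  have hx : ∀ t, HasDerivAt (fun u => γ u 0) (γ t 0 ^ 2 / 2) t := fun t =>
    hasDerivAt_fst_of_firstIntegralF9_eq_zero (hγ t)
      ((firstIntegralF9_eq_of_forall_hasDerivAt hγ t 0).trans hI0)
  refine ⟨hx, false_of_forall_hasDerivAt_mul_sq (f := fun u => γ u 0) (a := 1 / 2) (by norm_num) (fun t => ?_) hx0⟩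
  exact (hx t).congr_deriv (by ring)
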